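/- arXiv:math/0212211 — 2 statements merged into one kernel-verified Lean document; each statement's English description precedes it below -/
import Mathlib

section
/- Let $\mathfrak{a} \subseteq K[x_1,\dots,x_n]$ be a zero-dimensional monomial ideal (i.e., the quotient $K[x_1,\dots,x_n]/\mathfrak{a}$ is finite-dimensional over $K$, and the scheme defined by $\mathfrak{a}$ is supported at the origin). Suppose $a_1,\dots,a_n$ are positive reals such that every monomial $x_1^{u_1}\cdots x_n^{u_n} \in \mathfrak{a}$ satisfies $\sum_{i=1}^n u_i/a_i \ge 1$. Then $n! \cdot \dim_K(K[x_1,\dots,x_n]/\mathfrak{a}) \ge \prod_{i=1}^n a_i$. -/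
/-!
No monomial `x^u` with `u` in the open simplex `Δ = {u ≥ 0 : ∑ uᵢ / aᵢ < 1}` lies in `𝔞`, and the
residues of the monomials outside a monomial ideal are linearly independent modulo it, so
`dim_K K[x]/𝔞` is at least the number of lattice points in `Δ`. That number dominates
`vol Δ = ∏ aᵢ / n!`: slicing `Δ` at `u₀ = k` for `k < a₀` leaves an `(n-1)`-dimensional simplex with
edges `(1 - k/a₀) aᵢ`, so by induction on `n` everything reduces to the one-variable estimate
`a ≤ (N + 1) ∑_{k < a} (1 - k/a)^N`.
-/

open MvPolynomial Finset Module Nat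

theorem pow_succ_sub_pow_succ_le {α : Type*} [CommRing α] [LinearOrder α] [IsStrictOrderedRing α]
    {x y : α} (hy : 0 ≤ y) (hyx : y ≤ x) (N : ℕ) :
    x ^ (N + 1) - y ^ (N + 1) ≤ (N + 1) * x ^ N * (x - y) := by
  have h := abs_pow_sub_pow_le x y (N + 1)
  rw [abs_of_nonneg (hy.trans hyx), abs_of_nonneg hy, max_eq_left hyx,
    abs_of_nonneg (sub_nonneg.2 hyx), Nat.add_sub_cancel] at h
  push_cast at h
  linarith [le_abs_self (x ^ (N + 1) - y ^ (N + 1))]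

theorem one_sub_div_pos_of_mem_range_ceil {a : ℝ} (ha : 0 < a) {k : ℕ} (hk : k ∈ range ⌈a⌉₊) :
    0 < 1 - k / a := by
  rw [mem_range, Nat.lt_ceil] at hk
  rwa [sub_pos, div_lt_one ha]

/-- Left Riemann sum of `t ↦ (1 - t) ^ N` with step `1 / a` vs. its integral `1 / (N + 1)`. -/
theorem le_mul_sum_range_ceil_one_sub_div_pow {a : ℝ} (ha : 0 < a) (N : ℕ) :
    a ≤ (N + 1) * ∑ k ∈ range ⌈a⌉₊, (1 - k / a) ^ N := by
  set x : ℕ → ℝ := fun k => max (1 - k / a) 0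
  have hstep : ∀ k ∈ range ⌈a⌉₊,
      x k ^ (N + 1) - x (k + 1) ^ (N + 1) ≤ (N + 1) * (1 - k / a) ^ N / a := by
    intro k hk
    have hxk : x k = 1 - k / a := max_eq_left (one_sub_div_pos_of_mem_range_ceil ha hk).le
    have hdiff : x k - x (k + 1) ≤ 1 / a := by
      have : 1 - ((k + 1 : ℕ) : ℝ) / a ≤ x (k + 1) := le_max_left _ _
      rw [hxk]; push_cast at this; rw [add_div] at this; linarith
    have hanti : x (k + 1) ≤ x k := max_le_max_right 0 (by gcongr; simp)
    calc x k ^ (N + 1) - x (k + 1) ^ (N + 1) ≤ (N + 1) * x k ^ N * (x k - x (k + 1)) :=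
          pow_succ_sub_pow_succ_le (le_max_right _ _) hanti N
      _ ≤ (N + 1) * x k ^ N * (1 / a) := by gcongr
      _ = (N + 1) * (1 - k / a) ^ N / a := by rw [hxk]; ring
  have hlast : x ⌈a⌉₊ = 0 :=
    max_eq_right (by rw [sub_nonpos, one_le_div ha]; exact Nat.le_ceil a)
  have htel := sum_le_sum hstep
  rw [sum_range_sub' (fun k => x k ^ (N + 1)), hlast, ← sum_div, ← mul_sum] at htel
  have hfirst : x 0 = 1 := by simp [x]
  rwa [hfirst, one_pow, zero_pow N.succ_ne_zero, sub_zero, le_div_iff₀ ha, one_mul] at htel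

noncomputable def simplexLatticePoints {n : ℕ} (a : Fin n → ℝ) : Finset (Fin n → ℕ) :=
  {u ∈ Fintype.piFinset fun i => range ⌈a i⌉₊ | ∑ i, (u i : ℝ) / a i < 1}

theorem mem_simplexLatticePoints {n : ℕ} {a : Fin n → ℝ} (ha : ∀ i, 0 < a i) {u : Fin n → ℕ} :
    u ∈ simplexLatticePoints a ↔ ∑ i, (u i : ℝ) / a i < 1 := by
  refine ⟨fun hu => (mem_filter.1 hu).2,
    fun hu => mem_filter.2 ⟨Fintype.mem_piFinset.2 fun i => ?_, hu⟩⟩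
  have hi : (u i : ℝ) / a i < 1 :=
    (single_le_sum (f := fun j => (u j : ℝ) / a j)
      (fun j _ => div_nonneg (u j).cast_nonneg (ha j).le) (mem_univ i)).trans_lt hu
  rwa [mem_range, Nat.lt_ceil, ← div_lt_one (ha i)]

theorem sum_card_simplexLatticePoints_slice_le {n : ℕ} {a : Fin (n + 1) → ℝ} (ha : ∀ i, 0 < a i) :
    ∑ k ∈ range ⌈a 0⌉₊, #(simplexLatticePoints fun i : Fin n => a i.succ * (1 - k / a 0)) ≤
      #(simplexLatticePoints a) := by
  rw [← card_sigma]
  refine card_le_card_of_injOn (fun p => Fin.cons p.1 p.2) (fun p hp => ?_) (fun p _ q _ hpq => ?_)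
  · obtain ⟨hk, hu⟩ := mem_sigma.1 hp
    have hc := one_sub_div_pos_of_mem_range_ceil (ha 0) hk
    rw [mem_simplexLatticePoints fun i => mul_pos (ha i.succ) hc] at hu
    simp_rw [← div_div, ← sum_div, div_lt_one hc] at hu
    rw [mem_coe, mem_simplexLatticePoints ha, Fin.sum_univ_succ]
    simp only [Fin.cons_zero, Fin.cons_succ]
    linarith
  · obtain ⟨h1, h2⟩ := Fin.cons_injective2 hpq
    exact Sigma.ext h1 (heq_of_eq h2)

theorem prod_le_factorial_mul_card_simplexLatticePoints {n : ℕ} {a : Fin n → ℝ}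
    (ha : ∀ i, 0 < a i) :
    ∏ i, a i ≤ n ! * #(simplexLatticePoints a) := by
  induction n with
  | zero =>
    have h0 : (0 : Fin 0 → ℕ) ∈ simplexLatticePoints a := by simp [mem_simplexLatticePoints ha]
    simpa using card_pos.2 ⟨_, h0⟩
  | succ n ih =>
    set b : ℕ → Fin n → ℝ := fun k i => a i.succ * (1 - k / a 0)
    have hslice : ∀ k ∈ range ⌈a 0⌉₊,
        (1 - k / a 0) ^ n * ∏ i : Fin n, a i.succ ≤ n ! * #(simplexLatticePoints (b k)) := by
      intro k hk
      have hc := one_sub_div_pos_of_mem_range_ceil (ha 0) hk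
      simpa [b, prod_mul_distrib, mul_comm] using ih fun i => mul_pos (ha i.succ) hc
    calc ∏ i, a i = a 0 * ∏ i : Fin n, a i.succ := Fin.prod_univ_succ a
      _ ≤ ((n + 1) * ∑ k ∈ range ⌈a 0⌉₊, (1 - k / a 0) ^ n) * ∏ i : Fin n, a i.succ :=
          mul_le_mul_of_nonneg_right (le_mul_sum_range_ceil_one_sub_div_pow (ha 0) n)
            (prod_pos fun i _ => ha i.succ).le
      _ = (n + 1) * ∑ k ∈ range ⌈a 0⌉₊, (1 - k / a 0) ^ n * ∏ i : Fin n, a i.succ := by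
          rw [mul_assoc, sum_mul]
      _ ≤ (n + 1) * ∑ k ∈ range ⌈a 0⌉₊, (n ! * #(simplexLatticePoints (b k)) : ℝ) :=
          mul_le_mul_of_nonneg_left (sum_le_sum hslice) (by positivity)
      _ = (n + 1) ! * (∑ k ∈ range ⌈a 0⌉₊, #(simplexLatticePoints (b k)) : ℕ) := by
          push_cast; rw [Nat.factorial_succ, ← mul_sum]; push_cast; ring
      _ ≤ (n + 1) ! * #(simplexLatticePoints a) := by
          gcongr; exact sum_card_simplexLatticePoints_slice_le ha

section MonomialIdeal

variable {σ K : Type*} [Field K] {I : Ideal (MvPolynomial σ K)}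

theorem linearIndependent_mk_monomial_of_notMem
    (hmono : ∀ f ∈ I, ∀ u ∈ f.support, monomial u (1 : K) ∈ I)
    {S : Set (σ →₀ ℕ)} (hS : ∀ u ∈ S, monomial u (1 : K) ∉ I) :
    LinearIndependent K fun u : S => Ideal.Quotient.mkₐ K I (monomial (u : σ →₀ ℕ) 1) := by
  have hv : LinearIndependent K fun u : S => (monomial (u : σ →₀ ℕ) (1 : K)) :=
    (basisMonomials σ K).linearIndependent.comp _ Subtype.val_injective
  refine hv.map (f := (Ideal.Quotient.mkₐ K I).toLinearMap) ?_
  rw [Submodule.disjoint_def, ← Set.image_eq_range (monomial · 1), ← restrictSupport_eq_span]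
  intro p hpS hpI
  rw [LinearMap.mem_ker, AlgHom.toLinearMap_apply, Ideal.Quotient.mkₐ_eq_mk,
    Ideal.Quotient.eq_zero_iff_mem] at hpI
  rw [← MvPolynomial.support_eq_empty]
  exact eq_empty_of_forall_notMem fun u hu => hS u (hpS hu) (hmono p hpI u hu)

theorem card_le_finrank_quotient_of_monomial_notMem
    [FiniteDimensional K (MvPolynomial σ K ⧸ I)]
    (hmono : ∀ f ∈ I, ∀ u ∈ f.support, monomial u (1 : K) ∈ I)
    (S : Finset (σ →₀ ℕ)) (hS : ∀ u ∈ S, monomial u (1 : K) ∉ I) :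
    #S ≤ finrank K (MvPolynomial σ K ⧸ I) := by
  simpa using
    (linearIndependent_mk_monomial_of_notMem hmono (S := ↑S) hS).fintype_card_le_finrank

end MonomialIdeal

theorem stmt1_general (K : Type*) [Field K] (n : ℕ)
    (I : Ideal (MvPolynomial (Fin n) K))
    (hmono : ∀ f ∈ I, ∀ u ∈ f.support, (monomial u (1 : K)) ∈ I)
    (hfin : FiniteDimensional K (MvPolynomial (Fin n) K ⧸ I))
    (a : Fin n → ℝ) (ha : ∀ i, 0 < a i)
    (hNewton : ∀ u : Fin n →₀ ℕ, (monomial u (1 : K)) ∈ I →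
      1 ≤ ∑ i, (u i : ℝ) / a i) :
    ∏ i, a i ≤
      (Nat.factorial n : ℝ) * (Module.finrank K (MvPolynomial (Fin n) K ⧸ I) : ℝ) := by
  set S := (simplexLatticePoints a).map Finsupp.equivFunOnFinite.symm.toEmbedding
  have hS : ∀ u ∈ S, monomial u (1 : K) ∉ I := by
    intro u hu huI
    obtain ⟨v, hv, rfl⟩ := mem_map.1 hu
    rw [mem_simplexLatticePoints ha] at hv
    exact (hNewton _ huI).not_gt hv
  calc ∏ i, a i ≤ n ! * #(simplexLatticePoints a) :=
        prod_le_factorial_mul_card_simplexLatticePoints ha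
    _ ≤ n ! * finrank K (MvPolynomial (Fin n) K ⧸ I) := by
      have := hfin
      gcongr
      simpa [S] using card_le_finrank_quotient_of_monomial_notMem hmono S hS

/-- Lemma 1.3 of de Fernex–Ein–Mustață: if `𝔞` is a zero-dimensional monomial
ideal and every monomial `x^u ∈ 𝔞` satisfies `∑ uᵢ/aᵢ ≥ 1`, then
`n! · dim_K K[x]/𝔞 ≥ ∏ aᵢ`. -/
theorem stmt1 (K : Type*) [Field K] (n : ℕ) (hn : 1 ≤ n)
    (I : Ideal (MvPolynomial (Fin n) K))
    (hmono : ∀ f ∈ I, ∀ u ∈ f.support, (monomial u (1 : K)) ∈ I)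
    (hfin : FiniteDimensional K (MvPolynomial (Fin n) K ⧸ I))
    (hI : I ≠ ⊤)
    (a : Fin n → ℝ) (ha : ∀ i, 0 < a i)
    (hNewton : ∀ u : Fin n →₀ ℕ, (monomial u (1 : K)) ∈ I →
      1 ≤ ∑ i, (u i : ℝ) / a i) :
    ∏ i, a i ≤
      (Nat.factorial n : ℝ) * (Module.finrank K (MvPolynomial (Fin n) K ⧸ I) : ℝ) :=
  stmt1_general K n I hmono hfin a ha hNewton
end

section
/- Let $F \in K[x_0,\dots,x_n]$ be a nonzero homogeneous polynomial of degree $d$ over an algebraically closed field $K$. Then the set $L = \{p \in \mathbb{A}^{n+1} : \mathrm{mult}_p F \ge d\}$ of points where $F$ has multiplicity equal to its degree is a linear subspace of $\mathbb{A}^{n+1}$. -/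
open MvPolynomial

/-- The multiplicity of `F` at `p` is at least `d`: every monomial appearing in
the Taylor expansion of `F` at `p` (i.e., in `F(X + p)`) has total degree `≥ d`. -/
def multGE {K : Type*} [CommRing K] {σ : Type*}
    (F : MvPolynomial σ K) (p : σ → K) (d : ℕ) : Prop :=
  ∀ u ∈ ((bind₁ fun i : σ => (X i : MvPolynomial σ K) + C (p i)) F).support,
    d ≤ u.sum fun _ e => e

/-!
Let `translate p F = F(X + p)`. Translation does not change the coefficients of `F` in degrees
`≥ totalDegree F`, so for `F` homogeneous of degree `d` the translate is `F` plus terms of degree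
`< d`. Hence `mult_p F ≥ d` exactly when `F(X + p) = F`. Such periods `p` form a group because
translations compose, and are stable under scaling by homogeneity:
`F(X + c p) = c ^ d F(c⁻¹ X + p)`.
-/

namespace MvPolynomial

variable {R σ : Type*} [CommRing R]

noncomputable def translate (p : σ → R) : MvPolynomial σ R →ₐ[R] MvPolynomial σ R :=
  bind₁ fun i => X i + C (p i)

@[simp]
theorem translate_X (p : σ → R) (i : σ) : translate p (X i) = X i + C (p i) :=
  bind₁_X_right _ _

theorem translate_zero : translate (0 : σ → R) = AlgHom.id R _ := by
  refine algHom_ext fun i => ?_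
  simp

theorem translate_add (p q : σ → R) : translate (p + q) = (translate q).comp (translate p) := by
  refine algHom_ext fun i => ?_
  simp only [translate_X, Pi.add_apply, map_add, AlgHom.comp_apply, algHom_C, algebraMap_eq]
  ring

theorem coeff_translate_of_totalDegree_le [IsDomain R] (p : σ → R) {φ : MvPolynomial σ R}
    {v : σ →₀ ℕ} (hv : φ.totalDegree ≤ v.degree) :
    coeff v (translate p φ) = coeff v φ := by
  classical
  suffices hmon : ∀ s a, ∀ v : σ →₀ ℕ, (monomial s a).totalDegree ≤ v.degree →
      coeff v (translate p (monomial s a)) = coeff v (monomial s a) by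
    conv_lhs => rw [φ.as_sum]
    conv_rhs => rw [φ.as_sum]
    rw [map_sum, coeff_sum, coeff_sum]
    refine Finset.sum_congr rfl fun s hs => hmon _ _ _ ?_
    exact (totalDegree_monomial_le _ _).trans ((le_totalDegree hs).trans hv)
  refine induction_on_monomial (fun a v _ => by simp) fun φ n ih v hv => ?_
  rcases eq_or_ne φ 0 with rfl | hφ
  · simp
  rw [totalDegree_mul_of_isDomain hφ (X_ne_zero n), totalDegree_X] at hv
  have hlow : coeff v (translate p φ) = 0 := by
    rw [ih v (by omega)]
    exact coeff_eq_zero_of_totalDegree_lt (by rw [← Finsupp.degree_apply]; omega)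
  rw [map_mul, translate_X, mul_add, mul_comm _ (C _), coeff_add, coeff_C_mul, hlow, mul_zero,
    add_zero, coeff_mul_X', coeff_mul_X']
  split_ifs with hn
  · refine ih _ ?_
    have hle : Finsupp.single n 1 ≤ v :=
      Finsupp.single_le_iff.mpr (Nat.one_le_iff_ne_zero.mpr (Finsupp.mem_support_iff.mp hn))
    have := congrArg Finsupp.degree (tsub_add_cancel_of_le hle)
    rw [map_add, Finsupp.degree_single] at this
    omega
  · rfl

theorem IsHomogeneous.bind₁_C_mul {τ : Type*} {φ : MvPolynomial σ R} {m : ℕ}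
    (hφ : φ.IsHomogeneous m) (c : R) (g : σ → MvPolynomial τ R) :
    bind₁ (fun i => C c * g i) φ = C c ^ m * bind₁ g φ := by
  conv_lhs => rw [φ.as_sum]
  conv_rhs => rw [φ.as_sum]
  rw [map_sum, map_sum, Finset.mul_sum]
  refine Finset.sum_congr rfl fun s hs => ?_
  simp only [bind₁_monomial, mul_pow, Finset.prod_mul_distrib, Finset.prod_pow_eq_pow_sum,
    ← hφ.degree_eq_sum_deg_support hs]
  ring

theorem IsHomogeneous.translate_smul_eq_self {K : Type*} [Field K] {F : MvPolynomial σ K}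
    {d : ℕ} (hF : F.IsHomogeneous d) {p : σ → K} (hp : translate p F = F) (c : K) :
    translate (c • p) F = F := by
  rcases eq_or_ne c 0 with rfl | hc
  · rw [zero_smul, translate_zero, AlgHom.id_apply]
  calc translate (c • p) F
      = bind₁ (fun i => C c * (C c⁻¹ * X i + C (p i))) F := by
        refine congrArg (bind₁ · F) (_root_.funext fun i => ?_)
        rw [mul_add, ← mul_assoc, ← map_mul, mul_inv_cancel₀ hc, C_1, one_mul, ← map_mul,
          Pi.smul_apply, smul_eq_mul]
    _ = C c ^ d * bind₁ (fun i => C c⁻¹ * X i) (translate p F) := by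
        rw [hF.bind₁_C_mul, translate, bind₁_bind₁]
        simp only [map_add, bind₁_X_right, bind₁_C_right]
    _ = F := by
        rw [hp, hF.bind₁_C_mul, bind₁_X_left, AlgHom.id_apply, ← mul_assoc, ← mul_pow,
          ← map_mul, mul_inv_cancel₀ hc, C_1, one_pow, one_mul]

def IsHomogeneous.translationStabilizer {K : Type*} [Field K] {F : MvPolynomial σ K} {d : ℕ}
    (hF : F.IsHomogeneous d) : Submodule K (σ → K) where
  carrier := {p | translate p F = F}
  zero_mem' := by simp [translate_zero]
  add_mem' {p q} hp hq := by
    simp only [Set.mem_ofPred_eq, translate_add, AlgHom.comp_apply] at hp hq ⊢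
    rw [hp, hq]
  smul_mem' c _ hp := hF.translate_smul_eq_self hp c

end MvPolynomial

theorem multGE_iff_translate_eq_self {R σ : Type*} [CommRing R] [IsDomain R]
    {F : MvPolynomial σ R} {d : ℕ} (hF : F.IsHomogeneous d) (p : σ → R) :
    multGE F p d ↔ translate p F = F := by
  change (∀ u ∈ (translate p F).support, d ≤ u.degree) ↔ _
  constructor
  · intro h
    ext v
    by_cases hv : d ≤ v.degree
    · exact coeff_translate_of_totalDegree_le p (hF.totalDegree_le.trans hv)
    · rw [hF.coeff_eq_zero (by omega)]
      by_contra hne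
      exact hv (h v (mem_support_iff.mpr hne))
  · intro h u hu
    rw [h] at hu
    exact (hF.degree_eq_sum_deg_support hu).le

theorem stmt8_general (K : Type*) [Field K] (n d : ℕ)
    (F : MvPolynomial (Fin (n + 1)) K)
    (hhom : F.IsHomogeneous d) :
    ∃ W : Submodule K (Fin (n + 1) → K),
      {p : Fin (n + 1) → K | multGE F p d} = (W : Set (Fin (n + 1) → K)) :=
  ⟨hhom.translationStabilizer, Set.ext fun p => multGE_iff_translate_eq_self hhom p⟩

/-- Bézout-type fact (proof of Theorem 3.5): for a nonzero homogeneous `F` of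
degree `d` over an algebraically closed field, the locus
`L = {p ∈ 𝔸^{n+1} : mult_p F ≥ d}` is a linear subspace. -/
theorem stmt8 (K : Type*) [Field K] [IsAlgClosed K] (n d : ℕ)
    (F : MvPolynomial (Fin (n + 1)) K) (hF : F ≠ 0)
    (hhom : F.IsHomogeneous d) :
    ∃ W : Submodule K (Fin (n + 1) → K),
      {p : Fin (n + 1) → K | multGE F p d} = (W : Set (Fin (n + 1) → K)) :=
  stmt8_general K n d F hhom
end
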